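/- Let R be a commutative Noetherian ring, let i : M → I be a morphism of R-modules, and let E be an injective cogenerator. If the induced morphism Hom_R(i,E) : Hom_R(I,E) → Hom_R(M,E) is a flat cover, then i is an injective envelope. -/

import Mathlib

universe u

variable (R : Type u) [CommRing R]

/-- A morphism `f : F → M` with `F` flat is a flat precover if every morphism from a
flat module to `M` factors through `f`. -/
def IsFlatPrecover {F M : Type u} [AddCommGroup F] [AddCommGroup M] [Module R F]
    [Module R M] (f : F →ₗ[R] M) : Prop :=
  Module.Flat R F ∧
    ∀ (F' : Type u) [AddCommGroup F'] [Module R F'], Module.Flat R F' →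
      ∀ g : F' →ₗ[R] M, ∃ h : F' →ₗ[R] F, f ∘ₗ h = g

/-- A flat precover `f : F → M` is a flat cover if every `h : F → F` with `f ∘ h = f`
is an automorphism. -/
def IsFlatCover {F M : Type u} [AddCommGroup F] [AddCommGroup M] [Module R F]
    [Module R M] (f : F →ₗ[R] M) : Prop :=
  IsFlatPrecover R f ∧ ∀ h : F →ₗ[R] F, f ∘ₗ h = f → Function.Bijective h

/-- A morphism `i : M → E` is an injective envelope if `E` is injective, `i` is
injective, and the image of `i` is an essential submodule of `E`. -/
def IsInjectiveEnvelope {M E : Type u} [AddCommGroup M] [AddCommGroup E] [Module R M]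
    [Module R E] (i : M →ₗ[R] E) : Prop :=
  Module.Injective R E ∧ Function.Injective i ∧
    ∀ N : Submodule R E, N ≠ ⊥ → N ⊓ LinearMap.range i ≠ ⊥

/-- An injective cogenerator is an injective module `E` such that `Hom(N, E) ≠ 0`
for every nonzero module `N`. -/
def IsInjectiveCogenerator (E : Type u) [AddCommGroup E] [Module R E] : Prop :=
  Module.Injective R E ∧
    ∀ (N : Type u) [AddCommGroup N] [Module R N], (∃ x : N, x ≠ 0) →
      ∃ g : N →ₗ[R] E, g ≠ 0

/-!
For an injective module `E` and a finitely generated module `X`, evaluation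
`X ⊗ Hom(I, E) → Hom(Hom(X, I), E)`, `x ⊗ ψ ↦ (f ↦ ψ (f x))`, is surjective, and for `X = R` it is
bijective. Over a Noetherian ring every ideal `a` is finitely generated, so flatness of
`Hom(I, E)` makes `Hom(Hom(R, I), E) → Hom(Hom(a, I), E)` injective; as `E` is a cogenerator,
`Hom(R, I) → Hom(a, I)` is then surjective, which is Baer's criterion for `I`.
A flat precover is surjective (test it against `R`), so `Hom(i, E)` is onto and `i` is injective.
If `N ⊓ im i = 0`, then `i` extends along the injection `M → I ⧸ N` to some `j : I ⧸ N → I`;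
precomposition with `j ∘ (I → I ⧸ N)` is an endomorphism of the cover over `Hom(i, E)`, hence onto,
so every map `I → E` kills `N`, and `N = 0`.
-/

open TensorProduct LinearMap

section

variable {R}

theorem IsFlatPrecover.surjective {F M : Type u} [AddCommGroup F] [AddCommGroup M]
    [Module R F] [Module R M] {f : F →ₗ[R] M} (hf : IsFlatPrecover R f) :
    Function.Surjective f := fun m ↦ by
  obtain ⟨h, hfh⟩ := hf.2 R Module.Flat.self (toSpanSingleton R M m)
  exact ⟨h 1, by simpa using congr($hfh 1)⟩

namespace IsInjectiveCogenerator

variable {E A B : Type u} [AddCommGroup E] [Module R E] [AddCommGroup A] [Module R A]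
  [AddCommGroup B] [Module R B]

theorem exists_apply_ne_zero (hE : IsInjectiveCogenerator R E) {x : A} (hx : x ≠ 0) :
    ∃ ψ : A →ₗ[R] E, ψ x ≠ 0 := by
  have : Module.Injective R E := hE.1
  let x' : R ∙ x := ⟨x, Submodule.mem_span_singleton_self x⟩
  obtain ⟨g, hg⟩ := hE.2 (R ∙ x) ⟨x', by simpa [x'] using hx⟩
  have hgx : g x' ≠ 0 := fun hgx ↦ hg <| by
    ext ⟨y, hy⟩
    obtain ⟨r, rfl⟩ := Submodule.mem_span_singleton.mp hy
    change g (r • x') = 0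
    rw [map_smul, hgx, smul_zero]
  obtain ⟨ψ, hψ⟩ := Module.Injective.extension_property R E _ A (R ∙ x).subtype
    (Submodule.injective_subtype _) g
  exact ⟨ψ, by simpa [← hψ] using hgx⟩

theorem injective_of_surjective_lcomp (hE : IsInjectiveCogenerator R E) {f : A →ₗ[R] B}
    (hf : Function.Surjective (lcomp R E f)) : Function.Injective f := by
  refine (injective_iff_map_eq_zero f).2 fun x hx ↦ by_contra fun hx0 ↦ ?_
  obtain ⟨ψ, hψ⟩ := hE.exists_apply_ne_zero hx0
  obtain ⟨φ, rfl⟩ := hf ψ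
  exact hψ (by simp [hx])

theorem surjective_of_injective_lcomp (hE : IsInjectiveCogenerator R E) {f : A →ₗ[R] B}
    (hf : Function.Injective (lcomp R E f)) : Function.Surjective f := fun b ↦ by
  by_contra hb
  have hq : (range f).mkQ b ≠ 0 := by simpa [Submodule.Quotient.mk_eq_zero] using hb
  obtain ⟨ψ, hψ⟩ := hE.exists_apply_ne_zero hq
  have hψf : ψ ∘ₗ (range f).mkQ = 0 := hf <| by
    rw [map_zero, lcomp_apply', comp_assoc, range_mkQ_comp, comp_zero]
  exact hψ congr($hψf b)

theorem eq_bot_of_disjoint_range [Module.Injective R B] (hE : IsInjectiveCogenerator R E)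
    {f : A →ₗ[R] B} (hf : Function.Injective f)
    (hmin : ∀ h : (B →ₗ[R] E) →ₗ[R] B →ₗ[R] E, lcomp R E f ∘ₗ h = lcomp R E f →
      Function.Surjective h)
    {N : Submodule R B} (hN : Disjoint N (range f)) : N = ⊥ := by
  have hfN : Function.Injective (N.mkQ ∘ₗ f) := (injective_iff_map_eq_zero _).2 fun x hx ↦
    hf <| by
      rw [map_zero]
      exact Submodule.disjoint_def.1 hN _ ((Submodule.Quotient.mk_eq_zero N).1 hx) ⟨x, rfl⟩
  obtain ⟨j, hj⟩ := Module.Injective.extension_property R B _ _ _ hfN f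
  have hsurj := hmin (lcomp R E (j ∘ₗ N.mkQ)) <| by
    ext φ x
    exact congrArg φ (LinearMap.congr_fun hj x)
  refine (Submodule.eq_bot_iff N).2 fun n hn ↦ by_contra fun hn0 ↦ ?_
  obtain ⟨ψ, hψ⟩ := hE.exists_apply_ne_zero hn0
  obtain ⟨φ, rfl⟩ := hsurj ψ
  exact hψ (by simp [(Submodule.Quotient.mk_eq_zero N).2 hn])

end IsInjectiveCogenerator

section TensorHomEval

variable {I E : Type u} [AddCommGroup I] [Module R I] [AddCommGroup E] [Module R E]

variable (R I E) in
noncomputable def tensorHomEval (X : Type u) [AddCommGroup X] [Module R X] :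
    X ⊗[R] (I →ₗ[R] E) →ₗ[R] (X →ₗ[R] I) →ₗ[R] E :=
  TensorProduct.lift ((llcomp R (X →ₗ[R] I) I E).flip ∘ₗ applyₗ)

@[simp]
theorem tensorHomEval_tmul_apply {X : Type u} [AddCommGroup X] [Module R X] (x : X)
    (ψ : I →ₗ[R] E) (f : X →ₗ[R] I) : tensorHomEval R I E X (x ⊗ₜ ψ) f = ψ (f x) :=
  rfl

theorem tensorHomEval_comp_rTensor {X Y : Type u} [AddCommGroup X] [Module R X]
    [AddCommGroup Y] [Module R Y] (g : X →ₗ[R] Y) :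
    tensorHomEval R I E Y ∘ₗ g.rTensor _ = lcomp R E (lcomp R I g) ∘ₗ tensorHomEval R I E X := by
  ext
  rfl

theorem tensorHomEval_pi_surjective (n : ℕ) :
    Function.Surjective (tensorHomEval R I E (Fin n → R)) := fun χ ↦ by
  refine ⟨∑ k, (fun j ↦ if k = j then 1 else 0) ⊗ₜ (χ ∘ₗ smulRightₗ (proj k)), ?_⟩
  refine LinearMap.ext fun f ↦ ?_
  rw [map_sum, LinearMap.sum_apply]
  simp only [tensorHomEval_tmul_apply, comp_apply]
  rw [← map_sum]
  congr 1
  refine LinearMap.ext fun v ↦ ?_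
  simp [pi_apply_eq_sum_univ f v]

theorem tensorHomEval_surjective [Module.Injective R E] (X : Type u) [AddCommGroup X]
    [Module R X] [Module.Finite R X] : Function.Surjective (tensorHomEval R I E X) := fun χ ↦ by
  obtain ⟨n, p, hp⟩ := Module.Finite.exists_fin' R X
  obtain ⟨χ', hχ'⟩ := Module.Injective.extension_property R E _ _ (lcomp R I p)
    (lcomp_injective_of_surjective p hp) χ
  obtain ⟨t, rfl⟩ := tensorHomEval_pi_surjective n χ'
  exact ⟨p.rTensor _ t, by rw [← comp_apply, tensorHomEval_comp_rTensor, comp_apply, ← hχ']; rfl⟩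

theorem tensorHomEval_self_injective : Function.Injective (tensorHomEval R I E R) := by
  have hθ : tensorHomEval R I E R =
      lcomp R E (ringLmapEquivSelf R R I).toLinearMap ∘ₗ (TensorProduct.lid R _).toLinearMap := by
    ext
    simp
  rw [hθ, coe_comp]
  exact (lcomp_injective_of_surjective _ (LinearEquiv.surjective _)).comp (LinearEquiv.injective _)

end TensorHomEval

theorem IsInjectiveCogenerator.injective_of_flat_hom [IsNoetherianRing R] {I E : Type u}
    [AddCommGroup I] [Module R I] [AddCommGroup E] [Module R E] (hE : IsInjectiveCogenerator R E)
    [Module.Flat R (I →ₗ[R] E)] : Module.Injective R I := by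
  have : Module.Injective R E := hE.1
  refine (Module.Baer.iff_surjective.2 fun a ↦ hE.surjective_of_injective_lcomp ?_).injective
  refine Function.Injective.of_comp_right (g := tensorHomEval R I E a) ?_
    (tensorHomEval_surjective a)
  rw [← coe_comp, ← tensorHomEval_comp_rTensor, coe_comp]
  exact tensorHomEval_self_injective.comp
    (Module.Flat.rTensor_preserves_injective_linearMap _ a.injective_subtype)

end

theorem injectiveEnvelope_of_dual_flatCover [IsNoetherianRing R]
    {M I : Type u} [AddCommGroup M] [AddCommGroup I] [Module R M] [Module R I]
    (i : M →ₗ[R] I) (E : Type u) [AddCommGroup E] [Module R E]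
    (hE : IsInjectiveCogenerator R E) (h : IsFlatCover R (LinearMap.lcomp R E i)) :
    IsInjectiveEnvelope R i := by
  obtain ⟨hpre, hmin⟩ := h
  have : Module.Flat R (I →ₗ[R] E) := hpre.1
  have hI : Module.Injective R I := hE.injective_of_flat_hom
  have hi : Function.Injective i := hE.injective_of_surjective_lcomp hpre.surjective
  exact ⟨hI, hi, fun N hN hNi ↦
    hN (hE.eq_bot_of_disjoint_range hi (fun h hh ↦ (hmin h hh).2) (disjoint_iff.2 hNi))⟩
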